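/- arXiv:1606.00671 — 3 statements merged into one kernel-verified Lean document; each statement's English description precedes it below -/
import Mathlib

section
/- For all real x with 0 < x ≤ 1 and all α > 0, one has ln(e + α/x) ≤ ln(e + α) · (1 − ln x). -/
theorem log_e_add_div_le (x α : ℝ) (hx : 0 < x) (hx1 : x ≤ 1) (hα : 0 < α) :
    Real.log (Real.exp 1 + α / x) ≤ Real.log (Real.exp 1 + α) * (1 - Real.log x) := by
  have he : (0:ℝ) < Real.exp 1 := Real.exp_pos 1
  have h1 : Real.exp 1 + α / x ≤ (Real.exp 1 + α) / x := by
    rw [add_div]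
    have : Real.exp 1 ≤ Real.exp 1 / x := by
      rw [le_div_iff₀ hx]
      nlinarith
    linarith
  have h2 : Real.log (Real.exp 1 + α / x) ≤ Real.log ((Real.exp 1 + α) / x) :=
    Real.log_le_log (by positivity) h1
  rw [Real.log_div (by positivity) (ne_of_gt hx)] at h2
  have hA : 1 ≤ Real.log (Real.exp 1 + α) := by
    have := Real.log_le_log he (show Real.exp 1 ≤ Real.exp 1 + α by linarith)
    rw [Real.log_exp] at this
    exact this
  have hlx : Real.log x ≤ 0 := Real.log_nonpos hx.le hx1
  nlinarith
end

section
/- Let f be a nonnegative measurable function on [t₀, T], λ a nonnegative locally integrable function, and μ a positive increasing continuous function. If f(t) ≤ α + ∫_{t₀}^t λ(s) μ(f(s)) ds for all t ∈ [t₀,T] with α > 0, then W(f(t)) ≤ W(α) + ∫_{t₀}^t λ(s) ds, where W(x) = ∫_a^x dr/μ(r) for some fixed a > 0. -/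
/-!
Put `g t = α + ∫_{t₀}^t λ μ(f)`, `Λ t = ∫_{t₀}^t λ` and `W' = 1/μ`. Since `f ≤ g` and `g` is
nondecreasing, `g v - g u ≤ μ(g v) (Λ v - Λ u)` for `u ≤ v`, hence
`W(g v) - W(g u) ≤ (μ(g v) / μ(g u)) (Λ v - Λ u)`. For `c > 1`, continuity of `μ ∘ g` makes the
ratio smaller than `c` for `v` slightly to the right of `u`, so `W ∘ g - c Λ` is locally
nonincreasing to the right and, being continuous, nonincreasing. Letting `c → 1` gives
`W(g t) ≤ W(α) + Λ t`, and `W(f t) ≤ W(g t)` because `W` is increasing. This avoids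
differentiating `g`, which is only absolutely continuous.
-/

open MeasureTheory intervalIntegral

open Set Filter Topology

theorem le_of_continuousOn_of_eventually_le_nhdsGT {h : ℝ → ℝ} {a b : ℝ} (hab : a ≤ b)
    (hh : ContinuousOn h (Icc a b)) (hloc : ∀ x ∈ Ico a b, ∀ᶠ y in 𝓝[>] x, h y ≤ h x) :
    h b ≤ h a := by
  have hclosed : IsClosed ({x | h x ≤ h a} ∩ Icc a b) := by
    rw [inter_comm]
    exact hh.preimage_isClosed_of_isClosed isClosed_Icc isClosed_Iic
  refine hclosed.Icc_subset_of_forall_mem_nhdsWithin (le_refl (h a)) (fun x hx => ?_)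
    (right_mem_Icc.2 hab)
  filter_upwards [hloc x hx.2] with y hy using hy.trans hx.1

theorem IntervalIntegrable.mono_Icc {E : Type*} [NormedAddCommGroup E] {f : ℝ → E}
    {ν : Measure ℝ} {a b u v : ℝ} (hf : IntervalIntegrable f ν a b) (hu : u ∈ Icc a b)
    (hv : v ∈ Icc a b) : IntervalIntegrable f ν u v :=
  hf.mono_set (uIcc_subset_uIcc (Icc_subset_uIcc hu) (Icc_subset_uIcc hv))

theorem monotoneOn_primitive_of_nonneg {k : ℝ → ℝ} {a b : ℝ}
    (hk_int : IntervalIntegrable k volume a b) (hk_nonneg : ∀ s ∈ Icc a b, 0 ≤ k s) :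
    MonotoneOn (fun t => ∫ s in a..t, k s) (Icc a b) := by
  intro u hu v hv huv
  have ha : a ∈ Icc a b := left_mem_Icc.2 (hu.1.trans hu.2)
  rw [← sub_nonneg, integral_interval_sub_left (hk_int.mono_Icc ha hv) (hk_int.mono_Icc ha hu)]
  exact integral_nonneg huv fun s hs => hk_nonneg s ⟨hu.1.trans hs.1, hs.2.trans hv.2⟩

theorem integral_inv_le_sub_div {μ : ℝ → ℝ} (hμ_pos : ∀ r, 0 < μ r) (hμ_mono : Monotone μ)
    {x y : ℝ} (hxy : x ≤ y) : ∫ r in x..y, (μ r)⁻¹ ≤ (y - x) / μ x := by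
  have hμ_inv : Antitone fun r => (μ r)⁻¹ := fun r s hrs => inv_anti₀ (hμ_pos r) (hμ_mono hrs)
  calc ∫ r in x..y, (μ r)⁻¹ ≤ ∫ _ in x..y, (μ x)⁻¹ :=
        integral_mono_on hxy hμ_inv.intervalIntegrable intervalIntegrable_const
          fun r hr => hμ_inv hr.1
    _ = (y - x) / μ x := by simp [div_eq_mul_inv]

theorem integral_inv_le_of_sub_le_mul {μ g Λ : ℝ → ℝ} {a b : ℝ} (hab : a ≤ b)
    (hμ_pos : ∀ r, 0 < μ r) (hμ_mono : Monotone μ) (hμ_cont : Continuous μ)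
    (hg_mono : MonotoneOn g (Icc a b)) (hg_cont : ContinuousOn g (Icc a b))
    (hΛ_cont : ContinuousOn Λ (Icc a b))
    (hstep : ∀ u ∈ Icc a b, ∀ v ∈ Icc a b, u ≤ v → g v - g u ≤ μ (g v) * (Λ v - Λ u)) :
    ∫ r in g a..g b, (μ r)⁻¹ ≤ Λ b - Λ a := by
  have hΛ_sub_nonneg : ∀ u ∈ Icc a b, ∀ v ∈ Icc a b, u ≤ v → 0 ≤ Λ v - Λ u :=
    fun u hu v hv huv => (mul_nonneg_iff_of_pos_left (hμ_pos _)).1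
      ((sub_nonneg.2 (hg_mono hu hv huv)).trans (hstep u hu v hv huv))
  rw [le_iff_forall_one_lt_le_mul₀
    (hΛ_sub_nonneg a (left_mem_Icc.2 hab) b (right_mem_Icc.2 hab) hab)]
  intro c hc
  have hμ_inv_int : ∀ x y, IntervalIntegrable (fun r => (μ r)⁻¹) volume x y :=
    (hμ_cont.inv₀ fun r => (hμ_pos r).ne').intervalIntegrable
  set H : ℝ → ℝ := fun s => (∫ r in g a..g s, (μ r)⁻¹) - c * Λ s with hH
  suffices H b ≤ H a by
    simp only [hH, integral_same] at this
    linarith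
  refine le_of_continuousOn_of_eventually_le_nhdsGT hab
    (((continuous_primitive hμ_inv_int _).comp_continuousOn hg_cont).sub
      (continuousOn_const.mul hΛ_cont)) fun x hx => ?_
  have hx' : x ∈ Icc a b := Ico_subset_Icc_self hx
  have hright : Ioc x b ⊆ Icc a b := Ioc_subset_Icc_self.trans (Icc_subset_Icc_left hx.1)
  have hμg : Tendsto (fun y => μ (g y)) (𝓝[>] x) (𝓝 (μ (g x))) := by
    rw [← nhdsWithin_Ioc_eq_nhdsGT hx.2]
    exact ((hμ_cont.continuousAt.comp_continuousWithinAt (hg_cont x hx')).mono hright).tendsto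
  filter_upwards [Ioc_mem_nhdsGT hx.2,
    hμg.eventually (gt_mem_nhds (lt_mul_of_one_lt_left (hμ_pos _) hc))] with y hy hμy
  have hy' : y ∈ Icc a b := hright hy
  have hxy : x ≤ y := hy.1.le
  have hW : ∫ r in g x..g y, (μ r)⁻¹ ≤ c * (Λ y - Λ x) :=
    calc ∫ r in g x..g y, (μ r)⁻¹ ≤ (g y - g x) / μ (g x) :=
          integral_inv_le_sub_div hμ_pos hμ_mono (hg_mono hx' hy' hxy)
      _ ≤ μ (g y) * (Λ y - Λ x) / μ (g x) := by
          gcongr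
          exacts [(hμ_pos _).le, hstep x hx' y hy' hxy]
      _ ≤ c * μ (g x) * (Λ y - Λ x) / μ (g x) := by
          gcongr
          exacts [(hμ_pos _).le, hΛ_sub_nonneg x hx' y hy' hxy]
      _ = c * (Λ y - Λ x) := by field_simp [(hμ_pos (g x)).ne']
  have hsplit := integral_interval_sub_left (hμ_inv_int (g a) (g y)) (hμ_inv_int (g a) (g x))
  simp only [hH]
  linarith

section Osgood

variable {t₀ T α : ℝ} {f lam μ : ℝ → ℝ}

theorem monotoneOn_osgood_primitive (hlam_nonneg : ∀ s, 0 ≤ lam s)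
    (hint : IntervalIntegrable (fun s => lam s * μ (f s)) volume t₀ T) (hμ_pos : ∀ r, 0 < μ r) :
    MonotoneOn (fun t => α + ∫ s in t₀..t, lam s * μ (f s)) (Icc t₀ T) :=
  (monotoneOn_primitive_of_nonneg hint fun s _ =>
    mul_nonneg (hlam_nonneg s) (hμ_pos _).le).const_add α

theorem osgood_primitive_sub_le (hlam_nonneg : ∀ s, 0 ≤ lam s)
    (hlam_int : IntervalIntegrable lam volume t₀ T)
    (hint : IntervalIntegrable (fun s => lam s * μ (f s)) volume t₀ T)
    (hμ_pos : ∀ r, 0 < μ r) (hμ_mono : Monotone μ)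
    (h : ∀ t ∈ Icc t₀ T, f t ≤ α + ∫ s in t₀..t, lam s * μ (f s))
    {u v : ℝ} (hu : u ∈ Icc t₀ T) (hv : v ∈ Icc t₀ T) (huv : u ≤ v) :
    (α + ∫ s in t₀..v, lam s * μ (f s)) - (α + ∫ s in t₀..u, lam s * μ (f s)) ≤
      μ (α + ∫ s in t₀..v, lam s * μ (f s)) * ((∫ s in t₀..v, lam s) - ∫ s in t₀..u, lam s) := by
  have ht₀ : t₀ ∈ Icc t₀ T := left_mem_Icc.2 (hu.1.trans hu.2)
  rw [add_sub_add_left_eq_sub, integral_interval_sub_left (hint.mono_Icc ht₀ hv)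
    (hint.mono_Icc ht₀ hu), integral_interval_sub_left (hlam_int.mono_Icc ht₀ hv)
    (hlam_int.mono_Icc ht₀ hu), ← intervalIntegral.integral_const_mul]
  refine integral_mono_on huv (hint.mono_Icc hu hv) ((hlam_int.mono_Icc hu hv).const_mul _)
    fun s hs => ?_
  have hs' : s ∈ Icc t₀ T := ⟨hu.1.trans hs.1, hs.2.trans hv.2⟩
  have hfs := (h s hs').trans (monotoneOn_osgood_primitive hlam_nonneg hint hμ_pos hs' hv hs.2)
  exact (mul_le_mul_of_nonneg_left (hμ_mono hfs) (hlam_nonneg s)).trans_eq (mul_comm _ _)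

end Osgood

theorem osgood_lemma_general (t₀ T α a : ℝ) (f lam μ : ℝ → ℝ)
    (hlam_nonneg : ∀ s, 0 ≤ lam s)
    (hlam_int : IntervalIntegrable lam volume t₀ T)
    (hint : IntervalIntegrable (fun s => lam s * μ (f s)) volume t₀ T)
    (hμ_pos : ∀ r, 0 < μ r) (hμ_mono : Monotone μ) (hμ_cont : Continuous μ)
    (h : ∀ t ∈ Set.Icc t₀ T, f t ≤ α + ∫ s in t₀..t, lam s * μ (f s)) :
    ∀ t ∈ Set.Icc t₀ T,
      (∫ r in a..(f t), (μ r)⁻¹) ≤ (∫ r in a..α, (μ r)⁻¹) + ∫ s in t₀..t, lam s := by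
  intro t ht
  set g : ℝ → ℝ := fun t => α + ∫ s in t₀..t, lam s * μ (f s) with hg
  have hsub : Icc t₀ t ⊆ uIcc t₀ T := (Icc_subset_Icc_right ht.2).trans Icc_subset_uIcc
  have hμ_inv_int : ∀ x y, IntervalIntegrable (fun r => (μ r)⁻¹) volume x y :=
    (hμ_cont.inv₀ fun r => (hμ_pos r).ne').intervalIntegrable
  have hcomparison : ∫ r in α..g t, (μ r)⁻¹ ≤ ∫ s in t₀..t, lam s := by
    simpa [hg] using integral_inv_le_of_sub_le_mul (g := g) (Λ := fun t => ∫ s in t₀..t, lam s)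
      ht.1 hμ_pos hμ_mono hμ_cont
      ((monotoneOn_osgood_primitive hlam_nonneg hint hμ_pos).mono (Icc_subset_Icc_right ht.2))
      ((continuousOn_const.add (continuousOn_primitive_interval' hint left_mem_uIcc)).mono hsub)
      ((continuousOn_primitive_interval' hlam_int left_mem_uIcc).mono hsub)
      fun u hu v hv huv => osgood_primitive_sub_le hlam_nonneg hlam_int hint hμ_pos hμ_mono h
        (Icc_subset_Icc_right ht.2 hu) (Icc_subset_Icc_right ht.2 hv) huv
  have hW_mono : ∫ r in a..f t, (μ r)⁻¹ ≤ ∫ r in a..g t, (μ r)⁻¹ := by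
    rw [← sub_nonneg, integral_interval_sub_left (hμ_inv_int _ _) (hμ_inv_int _ _)]
    exact integral_nonneg (h t ht) fun r _ => (inv_pos.2 (hμ_pos r)).le
  calc ∫ r in a..f t, (μ r)⁻¹ ≤ ∫ r in a..g t, (μ r)⁻¹ := hW_mono
    _ = (∫ r in a..α, (μ r)⁻¹) + ∫ r in α..g t, (μ r)⁻¹ :=
        (integral_add_adjacent_intervals (hμ_inv_int _ _) (hμ_inv_int _ _)).symm
    _ ≤ (∫ r in a..α, (μ r)⁻¹) + ∫ s in t₀..t, lam s := by gcongr

theorem osgood_lemma (t₀ T α a : ℝ) (f lam μ : ℝ → ℝ)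
    (hf_meas : Measurable f)
    (hf_nonneg : ∀ t ∈ Set.Icc t₀ T, 0 ≤ f t)
    (hlam_nonneg : ∀ s, 0 ≤ lam s)
    (hlam_int : IntervalIntegrable lam volume t₀ T)
    (hint : IntervalIntegrable (fun s => lam s * μ (f s)) volume t₀ T)
    (hμ_pos : ∀ r, 0 < μ r) (hμ_mono : Monotone μ) (hμ_cont : Continuous μ)
    (hα : 0 < α) (ha : 0 < a)
    (h : ∀ t ∈ Set.Icc t₀ T, f t ≤ α + ∫ s in t₀..t, lam s * μ (f s)) :
    ∀ t ∈ Set.Icc t₀ T,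
      (∫ r in a..(f t), (μ r)⁻¹) ≤ (∫ r in a..α, (μ r)⁻¹) + ∫ s in t₀..t, lam s :=
  osgood_lemma_general t₀ T α a f lam μ hlam_nonneg hlam_int hint hμ_pos hμ_mono hμ_cont h
end

section
/- Let C > 0, K₀ > 0 and T < 1/(2C²K₀). Suppose a sequence of nonnegative continuous functions Γⁿ on [0,T] satisfies Γⁿ(t) ≤ C K₀ / (1 − 2C² K₀ t) for all t ∈ [0,T]. Then the quantity C e^{C Uⁿ(t)} (K₀ + ∫_0^t e^{−C Uⁿ(τ)} (Γⁿ(τ))² dτ), where Uⁿ(t) = ∫_0^t Γⁿ(τ) dτ, is bounded by C K₀ / (1 − 2C² K₀ t), using the bound e^{C(Uⁿ(t)−Uⁿ(τ))} ≤ √((1 − 2C²K₀τ)/(1 − 2C²K₀t)). -/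
/-!
The function `ρ x = (1 - 2 C² K₀ x)^(-1/2)` solves `ρ' = C² K₀ ρ³`, `ρ 0 = 1`, and the hypothesis
on `Γ` reads `Γ ≤ C K₀ ρ²`. Hence `C Γ ≤ ρ' / ρ`, so `exp (C ∫_τ^t Γ) ≤ ρ t / ρ τ`, and the
integrand `exp (C ∫_τ^t Γ) Γ(τ)²` is at most `K₀ ρ(t) ρ'(τ)`. Integrating, the quantity is at most
`C (K₀ ρ(t) + K₀ ρ(t) (ρ(t) - 1)) = C K₀ ρ(t)² = C K₀ / (1 - 2 C² K₀ t)`.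
-/

open MeasureTheory intervalIntegral Set Real

theorem intervalIntegral.integral_mono_on_of_nonneg {f g : ℝ → ℝ} {a b : ℝ} (hab : a ≤ b)
    (hg : IntervalIntegrable g volume a b) (hf : ∀ x ∈ Ioc a b, 0 ≤ f x)
    (hfg : ∀ x ∈ Ioc a b, f x ≤ g x) : ∫ x in a..b, f x ≤ ∫ x in a..b, g x := by
  rw [integral_of_le hab, integral_of_le hab]
  exact integral_mono_of_nonneg (ae_restrict_of_forall_mem measurableSet_Ioc hf) hg.1
    (ae_restrict_of_forall_mem measurableSet_Ioc hfg)

theorem exp_mul_integral_le_div_of_le_logDeriv {Γ ρ ρ' : ℝ → ℝ} {C τ t : ℝ} (hτt : τ ≤ t)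
    (hΓ : IntervalIntegrable Γ volume τ t) (hρ_pos : ∀ x ∈ Icc τ t, 0 < ρ x)
    (hρ : ∀ x ∈ Icc τ t, HasDerivAt ρ (ρ' x) x) (hle : ∀ x ∈ Ioo τ t, C * Γ x ≤ ρ' x / ρ x) :
    exp (C * ∫ x in τ..t, Γ x) ≤ ρ t / ρ τ := by
  have hlog (x) (hx : x ∈ Icc τ t) : HasDerivAt (fun y ↦ log (ρ y)) (ρ' x / ρ x) x :=
    (hρ x hx).log (hρ_pos x hx).ne'
  have hint : ∫ x in τ..t, C * Γ x ≤ log (ρ t) - log (ρ τ) :=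
    integral_le_sub_of_hasDeriv_right_of_le hτt
      (fun x hx ↦ (hlog x hx).continuousAt.continuousWithinAt)
      (fun x hx ↦ (hlog x (Ioo_subset_Icc_self hx)).hasDerivWithinAt)
      ((intervalIntegrable_iff_integrableOn_Icc_of_le hτt).1 (hΓ.const_mul C)) hle
  calc exp (C * ∫ x in τ..t, Γ x) ≤ exp (log (ρ t) - log (ρ τ)) := by
        rw [← intervalIntegral.integral_const_mul]; exact exp_le_exp.2 hint
    _ = ρ t / ρ τ := by
      rw [exp_sub, exp_log (hρ_pos t ⟨hτt, le_rfl⟩), exp_log (hρ_pos τ ⟨le_rfl, hτt⟩)]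

section CubicBarrier

variable {Γ ρ : ℝ → ℝ} {C K₀ t : ℝ}

theorem exp_mul_integral_le_div_of_hasDerivAt_cube (hC : 0 ≤ C) (ht : 0 ≤ t)
    (hΓ_int : IntervalIntegrable Γ volume 0 t) (hΓ : ∀ x ∈ Icc 0 t, Γ x ≤ C * K₀ * ρ x ^ 2)
    (hρ_pos : ∀ x ∈ Icc 0 t, 0 < ρ x) (hρ : ∀ x ∈ Icc 0 t, HasDerivAt ρ (C ^ 2 * K₀ * ρ x ^ 3) x)
    {τ : ℝ} (hτ : τ ∈ Icc 0 t) : exp (C * ∫ s in τ..t, Γ s) ≤ ρ t / ρ τ := by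
  have hsub : Icc τ t ⊆ Icc 0 t := Icc_subset_Icc_left hτ.1
  refine exp_mul_integral_le_div_of_le_logDeriv hτ.2
    (hΓ_int.mono_set (uIcc_subset_uIcc_right (by rwa [uIcc_of_le ht])))
    (fun x hx ↦ hρ_pos x (hsub hx)) (fun x hx ↦ hρ x (hsub hx)) fun x hx ↦ ?_
  have hx' := hsub (Ioo_subset_Icc_self hx)
  calc C * Γ x ≤ C * (C * K₀ * ρ x ^ 2) := mul_le_mul_of_nonneg_left (hΓ x hx') hC
    _ = C ^ 2 * K₀ * ρ x ^ 3 / ρ x := by field_simp [(hρ_pos x hx').ne']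

theorem exp_mul_integral_mul_integral_le_of_hasDerivAt_cube (hC : 0 ≤ C) (ht : 0 ≤ t)
    (hΓ_int : IntervalIntegrable Γ volume 0 t) (hΓ_nonneg : ∀ x ∈ Icc 0 t, 0 ≤ Γ x)
    (hΓ : ∀ x ∈ Icc 0 t, Γ x ≤ C * K₀ * ρ x ^ 2) (hρ_pos : ∀ x ∈ Icc 0 t, 0 < ρ x)
    (hρ0 : ρ 0 = 1) (hρ : ∀ x ∈ Icc 0 t, HasDerivAt ρ (C ^ 2 * K₀ * ρ x ^ 3) x) :
    exp (C * ∫ s in 0..t, Γ s) * ∫ τ in 0..t, exp (-C * ∫ s in 0..τ, Γ s) * Γ τ ^ 2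
      ≤ K₀ * ρ t * (ρ t - 1) := by
  have hsplit (τ) (hτ : τ ∈ Icc 0 t) :
      exp (C * ∫ s in 0..t, Γ s) * exp (-C * ∫ s in 0..τ, Γ s) = exp (C * ∫ s in τ..t, Γ s) := by
    have hτ' : τ ∈ uIcc 0 t := by rwa [uIcc_of_le ht]
    rw [← exp_add, ← integral_interval_sub_left hΓ_int
      (hΓ_int.mono_set (uIcc_subset_uIcc_left hτ'))]
    ring_nf
  have hρ' : IntervalIntegrable (fun τ ↦ C ^ 2 * K₀ * ρ τ ^ 3) volume 0 t := by
    refine ContinuousOn.intervalIntegrable fun x hx ↦ ?_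
    rw [uIcc_of_le ht] at hx
    exact ((hρ x hx).continuousAt.pow 3).const_smul (C ^ 2 * K₀) |>.continuousWithinAt
  rw [← intervalIntegral.integral_const_mul]
  calc _ ≤ ∫ τ in 0..t, K₀ * ρ t * (C ^ 2 * K₀ * ρ τ ^ 3) := by
        refine integral_mono_on_of_nonneg ht (hρ'.const_mul _) (fun τ _ ↦ by positivity)
          fun τ hτ ↦ ?_
        have hτ' := Ioc_subset_Icc_self hτ
        have hsq : Γ τ ^ 2 ≤ (C * K₀ * ρ τ ^ 2) ^ 2 :=
          pow_le_pow_left₀ (hΓ_nonneg τ hτ') (hΓ τ hτ') 2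
        calc _ = exp (C * ∫ s in τ..t, Γ s) * Γ τ ^ 2 := by rw [← mul_assoc, hsplit τ hτ']
          _ ≤ ρ t / ρ τ * (C * K₀ * ρ τ ^ 2) ^ 2 :=
            mul_le_mul (exp_mul_integral_le_div_of_hasDerivAt_cube hC ht hΓ_int hΓ hρ_pos hρ hτ')
              hsq (sq_nonneg _) (div_nonneg (hρ_pos t ⟨ht, le_rfl⟩).le (hρ_pos τ hτ').le)
          _ = K₀ * ρ t * (C ^ 2 * K₀ * ρ τ ^ 3) := by field_simp [(hρ_pos τ hτ').ne']
    _ = K₀ * ρ t * (ρ t - 1) := by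
      rw [intervalIntegral.integral_const_mul,
        integral_eq_sub_of_hasDerivAt (by rwa [uIcc_of_le ht]) hρ', hρ0]

theorem mul_exp_mul_integral_le_of_hasDerivAt_cube (hC : 0 ≤ C) (hK : 0 ≤ K₀) (ht : 0 ≤ t)
    (hΓ_int : IntervalIntegrable Γ volume 0 t) (hΓ_nonneg : ∀ x ∈ Icc 0 t, 0 ≤ Γ x)
    (hΓ : ∀ x ∈ Icc 0 t, Γ x ≤ C * K₀ * ρ x ^ 2) (hρ_pos : ∀ x ∈ Icc 0 t, 0 < ρ x)
    (hρ0 : ρ 0 = 1) (hρ : ∀ x ∈ Icc 0 t, HasDerivAt ρ (C ^ 2 * K₀ * ρ x ^ 3) x) :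
    C * exp (C * ∫ τ in 0..t, Γ τ) *
        (K₀ + ∫ τ in 0..t, exp (-C * ∫ s in 0..τ, Γ s) * Γ τ ^ 2) ≤ C * K₀ * ρ t ^ 2 := by
  have hE : exp (C * ∫ s in 0..t, Γ s) ≤ ρ t := by
    simpa [hρ0] using exp_mul_integral_le_div_of_hasDerivAt_cube hC ht hΓ_int hΓ hρ_pos hρ
      ⟨le_rfl, ht⟩
  have hI := exp_mul_integral_mul_integral_le_of_hasDerivAt_cube hC ht hΓ_int hΓ_nonneg hΓ
    hρ_pos hρ0 hρ
  calc _ = C * (K₀ * exp (C * ∫ s in 0..t, Γ s) +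
        exp (C * ∫ s in 0..t, Γ s) * ∫ τ in 0..t, exp (-C * ∫ s in 0..τ, Γ s) * Γ τ ^ 2) := by
        ring
    _ ≤ C * (K₀ * ρ t + K₀ * ρ t * (ρ t - 1)) := by gcongr
    _ = C * K₀ * ρ t ^ 2 := by ring

end CubicBarrier

theorem hasDerivAt_inv_sqrt_one_sub_mul {a x : ℝ} (hx : 0 < 1 - a * x) :
    HasDerivAt (fun y ↦ (√(1 - a * y))⁻¹) (a / 2 * (√(1 - a * x))⁻¹ ^ 3) x := by
  have hlin : HasDerivAt (fun y ↦ 1 - a * y) (-a) x := by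
    simpa using ((hasDerivAt_id x).const_mul a).const_sub 1
  refine ((hlin.sqrt hx.ne').inv (Real.sqrt_pos.2 hx).ne').congr_deriv ?_
  field_simp

theorem inductive_uniform_bound_general (C K₀ T : ℝ) (Γ : ℝ → ℝ)
    (hC : 0 < C) (hK : 0 < K₀) (hT : T < 1 / (2 * C ^ 2 * K₀))
    (hΓ_cont : ContinuousOn Γ (Set.Icc 0 T))
    (hΓ_nonneg : ∀ t ∈ Set.Icc 0 T, 0 ≤ Γ t)
    (hΓ : ∀ t ∈ Set.Icc 0 T, Γ t ≤ C * K₀ / (1 - 2 * C ^ 2 * K₀ * t)) :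
    ∀ t ∈ Set.Icc 0 T,
      C * Real.exp (C * ∫ τ in (0:ℝ)..t, Γ τ) *
          (K₀ + ∫ τ in (0:ℝ)..t, Real.exp (-C * ∫ s in (0:ℝ)..τ, Γ s) * (Γ τ) ^ 2)
        ≤ C * K₀ / (1 - 2 * C ^ 2 * K₀ * t) := by
  rintro t ⟨ht, htT⟩
  have hpos (x) (hx : x ≤ T) : 0 < 1 - 2 * C ^ 2 * K₀ * x := by
    have := (lt_div_iff₀' (by positivity)).1 (hx.trans_lt hT)
    linarith
  have hsq (x) (hx : x ≤ T) :
      (√(1 - 2 * C ^ 2 * K₀ * x))⁻¹ ^ 2 = 1 / (1 - 2 * C ^ 2 * K₀ * x) := by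
    rw [inv_pow, Real.sq_sqrt (hpos x hx).le, one_div]
  have hsub : Icc 0 t ⊆ Icc 0 T := Icc_subset_Icc_right htT
  calc _ ≤ C * K₀ * (√(1 - 2 * C ^ 2 * K₀ * t))⁻¹ ^ 2 := by
        refine mul_exp_mul_integral_le_of_hasDerivAt_cube
          (ρ := fun x ↦ (√(1 - 2 * C ^ 2 * K₀ * x))⁻¹) hC.le hK.le ht
          ((hΓ_cont.mono hsub).intervalIntegrable_of_Icc ht) (fun x hx ↦ hΓ_nonneg x (hsub hx))
          (fun x hx ↦ ?_) (fun x hx ↦ inv_pos.2 (Real.sqrt_pos.2 (hpos x (hsub hx).2)))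
          (by simp) fun x hx ↦ ?_
        · rw [hsq x (hsub hx).2, mul_one_div]; exact hΓ x (hsub hx)
        · exact (hasDerivAt_inv_sqrt_one_sub_mul (hpos x (hsub hx).2)).congr_deriv (by ring)
    _ = _ := by rw [hsq t htT, mul_one_div]

theorem inductive_uniform_bound (C K₀ T : ℝ) (Γ : ℝ → ℝ)
    (hC : 0 < C) (hK : 0 < K₀) (hT0 : 0 ≤ T) (hT : T < 1 / (2 * C ^ 2 * K₀))
    (hΓ_cont : ContinuousOn Γ (Set.Icc 0 T))
    (hΓ_nonneg : ∀ t ∈ Set.Icc 0 T, 0 ≤ Γ t)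
    (hΓ : ∀ t ∈ Set.Icc 0 T, Γ t ≤ C * K₀ / (1 - 2 * C ^ 2 * K₀ * t)) :
    ∀ t ∈ Set.Icc 0 T,
      C * Real.exp (C * ∫ τ in (0:ℝ)..t, Γ τ) *
          (K₀ + ∫ τ in (0:ℝ)..t, Real.exp (-C * ∫ s in (0:ℝ)..τ, Γ s) * (Γ τ) ^ 2)
        ≤ C * K₀ / (1 - 2 * C ^ 2 * K₀ * t) :=
  inductive_uniform_bound_general C K₀ T Γ hC hK hT hΓ_cont hΓ_nonneg hΓ
end
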